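/- For every positive integer n, 27 n⁵ · √3 · arctan( 1/(√3 · (2n + 1)) ) = (3/2) · ∑_{k=0}^∞ (1/(−27n⁶)^k) · ( 9n⁴/(6k+1) − 9n³/(6k+2) + 6n²/(6k+3) − 3n/(6k+4) + 1/(6k+5) ). -/

import Mathlib

/-!
For `|p| < 1` the imaginary part of `-log (1 - p e^{ix}) = ∑ (p e^{ix})^k / k` gives
`∑ p^k sin (k x) / k = arctan (p sin x / (1 - p cos x))`. At `x = π / l` one has
`sin ((l m + j) π / l) = (-1)^m sin (j π / l)`, so grouping the series into blocks of length `l`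
yields a BBP-type series in the base `-p^(-l)`. For `l = 6` and `p = -√3 / (3 n)` the base is
`-27 n⁶`, each coefficient `p^j sin (j π / 6)` is a rational multiple of `√3 / n^j`
(as `p² = 1 / (3 n²)`), and the generator evaluates to `-arctan (1 / (√3 (2 n + 1)))`.
-/

open Real

theorem Complex.arg_eq_arctan_of_re_pos {w : ℂ} (hw : 0 < w.re) :
    w.arg = Real.arctan (w.im / w.re) := by
  have hbound : |w.arg| < π / 2 := abs_arg_lt_pi_div_two_iff.2 (Or.inl hw)
  rw [← tan_arg, Real.arctan_tan (neg_lt_of_abs_lt hbound) (lt_of_abs_lt hbound)]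

theorem HasSum.sum_range_mul_add {M : Type*} [AddCommMonoid M] [TopologicalSpace M]
    [ContinuousAdd M] [RegularSpace M] {f : ℕ → M} {a : M} (hf : HasSum f a) {l : ℕ}
    (hl : l ≠ 0) : HasSum (fun m ↦ ∑ j ∈ Finset.range l, f (l * m + j)) a := by
  have : NeZero l := ⟨hl⟩
  refine ((Nat.divModEquiv l).symm.hasSum_iff.2 hf).prod_fiberwise fun m ↦ ?_
  simpa [Finset.sum_range, mul_comm l m] using hasSum_fintype (fun j : Fin l ↦ f (m * l + j))

namespace Real

theorem hasSum_pow_mul_sin_div {p : ℝ} (hp : |p| < 1) (x : ℝ) :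
    HasSum (fun k : ℕ ↦ p ^ k * sin (k * x) / k) (arctan (p * sin x / (1 - p * cos x))) := by
  set z : ℂ := p * Complex.exp (x * Complex.I)
  have hz : ‖z‖ < 1 := by simpa [z, Complex.norm_exp_ofReal_mul_I] using hp
  have hre : (1 - z).re = 1 - p * cos x := by simp [z, Complex.exp_ofReal_mul_I_re]
  have him : (1 - z).im = -(p * sin x) := by simp [z, Complex.exp_ofReal_mul_I_im]
  have hre_pos : 0 < (1 - z).re := by
    have : p * cos x ≤ |p| := (le_abs_self _).trans <| by
      rw [abs_mul]; exact mul_le_of_le_one_right (abs_nonneg p) (abs_cos_le_one x)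
    linarith
  have hterm (k : ℕ) : (z ^ k / k).im = p ^ k * sin (k * x) / k := by
    have : z ^ k = (p ^ k : ℝ) * Complex.exp ((k * x : ℝ) * Complex.I) := by
      push_cast
      rw [mul_pow, ← Complex.exp_nat_mul, mul_assoc]
    rw [this, ← Complex.ofReal_natCast, Complex.div_ofReal_im, Complex.im_ofReal_mul,
      Complex.exp_ofReal_mul_I_im]
  have hsum := Complex.hasSum_im (Complex.hasSum_taylorSeries_neg_log hz)
  rwa [funext hterm, Complex.neg_im, Complex.log_im, Complex.arg_eq_arctan_of_re_pos hre_pos,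
    him, hre, neg_div, arctan_neg, neg_neg] at hsum

theorem sin_natCast_mul_add_mul_pi_div (l m j : ℕ) (hl : l ≠ 0) :
    sin ((l * m + j : ℕ) * (π / l)) = (-1) ^ m * sin (j * (π / l)) := by
  rw [← sin_add_nat_mul_pi]
  congr 1
  push_cast
  field_simp
  ring

theorem hasSum_bbp_arctan {p : ℝ} (hp : |p| < 1) {l : ℕ} (hl : l ≠ 0) :
    HasSum (fun m : ℕ ↦ (-p ^ l) ^ m *
        ∑ j ∈ Finset.range l, p ^ j * sin (j * (π / l)) / (l * m + j))
      (arctan (p * sin (π / l) / (1 - p * cos (π / l)))) := by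
  convert (hasSum_pow_mul_sin_div hp (π / l)).sum_range_mul_add hl using 2 with m
  rw [Finset.mul_sum]
  refine Finset.sum_congr rfl fun j _ ↦ ?_
  rw [sin_natCast_mul_add_mul_pi_div l m j hl, pow_add, pow_mul, neg_pow]
  push_cast
  ring

theorem sum_range_six_pow_mul_sin_mul_pi_div_six (p c : ℝ) :
    ∑ j ∈ Finset.range 6, p ^ j * sin (j * (π / 6)) / (c + j) =
      p / 2 / (c + 1) + p ^ 2 * √3 / 2 / (c + 2) + p ^ 3 / (c + 3)
        + p ^ 4 * √3 / 2 / (c + 4) + p ^ 5 / 2 / (c + 5) := by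
  have h2 : sin (2 * (π / 6)) = √3 / 2 := by rw [← sin_pi_div_three]; ring_nf
  have h3 : sin (3 * (π / 6)) = 1 := by rw [← sin_pi_div_two]; ring_nf
  have h4 : sin (4 * (π / 6)) = √3 / 2 := by rw [← sin_pi_div_three, ← sin_pi_sub]; ring_nf
  have h5 : sin (5 * (π / 6)) = 1 / 2 := by rw [← sin_pi_div_six, ← sin_pi_sub]; ring_nf
  simp only [Finset.sum_range_succ, Finset.sum_range_zero]
  push_cast
  rw [h2, h3, h4, h5, one_mul, sin_pi_div_six]
  simp only [zero_mul, sin_zero, mul_zero, zero_div, zero_add]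
  ring

end Real

theorem arctan_generator_pi_div_six {N : ℝ} (hN : 0 < N) :
    -√3 / (3 * N) * sin (π / 6) / (1 - -√3 / (3 * N) * cos (π / 6)) =
      -(1 / (√3 * (2 * N + 1))) := by
  have hs : √3 ^ 2 = 3 := sq_sqrt (by norm_num)
  have hden : 1 - -√3 / (3 * N) * cos (π / 6) = (2 * N + 1) / (2 * N) := by
    rw [cos_pi_div_six]
    field_simp
    linear_combination hs
  rw [hden, sin_pi_div_six]
  field_simp
  linear_combination -hs

theorem bbp_block_pi_div_six {N : ℝ} (hN : N ≠ 0) (m : ℕ) :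
    (-(-√3 / (3 * N)) ^ 6) ^ m *
        ∑ j ∈ Finset.range 6, (-√3 / (3 * N)) ^ j * sin (j * (π / 6)) / (6 * m + j) =
      -(√3 / (54 * N ^ 5)) * (1 / (-(27 * N ^ 6)) ^ m *
        (9 * N ^ 4 / (6 * (m : ℝ) + 1) - 9 * N ^ 3 / (6 * (m : ℝ) + 2)
          + 6 * N ^ 2 / (6 * (m : ℝ) + 3) - 3 * N / (6 * (m : ℝ) + 4)
          + 1 / (6 * (m : ℝ) + 5))) := by
  set p := -√3 / (3 * N) with hp
  have hp2 : p ^ 2 = 1 / (3 * N ^ 2) := by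
    rw [hp, div_pow, neg_sq, sq_sqrt (by norm_num)]
    field_simp
  have hbase : -p ^ 6 = (-(27 * N ^ 6))⁻¹ := by
    rw [show p ^ 6 = (p ^ 2) ^ 3 by ring, hp2]
    field_simp
    ring
  rw [sum_range_six_pow_mul_sin_mul_pi_div_six, hbase, inv_pow, ← one_div,
    show p ^ 3 = p * p ^ 2 by ring, show p ^ 4 = (p ^ 2) ^ 2 by ring,
    show p ^ 5 = p * (p ^ 2) ^ 2 by ring, hp2, hp]
  field_simp
  ring

theorem stmt_11 (n : ℕ) (hn : 0 < n) :
    27 * (n : ℝ) ^ 5 * Real.sqrt 3 * Real.arctan (1 / (Real.sqrt 3 * (2 * (n : ℝ) + 1))) =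
      (3 / 2) * ∑' k : ℕ, (1 / (-(27 * (n : ℝ) ^ 6)) ^ k) *
        (9 * (n : ℝ) ^ 4 / (6 * (k : ℝ) + 1) - 9 * (n : ℝ) ^ 3 / (6 * (k : ℝ) + 2)
          + 6 * (n : ℝ) ^ 2 / (6 * (k : ℝ) + 3) - 3 * (n : ℝ) / (6 * (k : ℝ) + 4)
          + 1 / (6 * (k : ℝ) + 5)) := by
  set N : ℝ := (n : ℝ)
  have hN : 1 ≤ N := Nat.one_le_cast.2 hn
  have hs : √3 ^ 2 = 3 := sq_sqrt (by norm_num)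
  have hp : |-√3 / (3 * N)| < 1 := by
    rw [← sq_lt_one_iff_abs_lt_one, div_pow, neg_sq, hs, div_lt_one (by positivity)]
    nlinarith
  have hsum := hasSum_bbp_arctan hp (l := 6) (by norm_num)
  push_cast at hsum
  simp only [arctan_generator_pi_div_six (by positivity),
    bbp_block_pi_div_six (by positivity : N ≠ 0), arctan_neg] at hsum
  have hc : -(√3 / (54 * N ^ 5)) ≠ 0 := neg_ne_zero.2 (by positivity)
  have hT := hsum.mul_left (-(√3 / (54 * N ^ 5)))⁻¹
  simp only [inv_mul_cancel_left₀ hc] at hT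
  rw [hT.tsum_eq]
  generalize arctan (1 / (√3 * (2 * N + 1))) = A
  field_simp
  linear_combination 54 * A * hs
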